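/- (Theorem 1, equality of minima.) Let z^n be a minimizer over y^n ∈ 𝒴^n of the cost H(m(y^n)) + α·d_n(x^n,y^n), set m* = m(z^n), assume every entry of m* is strictly positive, and define the coefficients λ_{β,b} = log((Σ_{β'∈𝒴} m*_{β',b})/m*_{β,b}). Then min_{y^n∈𝒴^n} [ Σ_{β∈𝒴} Σ_{b∈𝒴^k} λ_{β,b}·m_{β,b}(y^n) + α·d_n(x^n,y^n) ] = min_{y^n∈𝒴^n} [ H(m(y^n)) + α·d_n(x^n,y^n) ]. -/

import Mathlib

/-- The entropy `𝓗(v)` of the (unnormalized) nonnegative vector `v`: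
`𝓗(v) = ∑ i, (v i / ‖v‖₁) * log (‖v‖₁ / v i)` if `v ≠ 0`, and `𝓗(0) = 0`,
where for a vector with nonnegative components `‖v‖₁ = ∑ i, v i`. -/
noncomputable def vecEnt {ι : Type*} [Fintype ι] (v : ι → ℝ) : ℝ :=
  @ite ℝ (v = 0) (Classical.propDecidable _) 0
    (∑ i, (v i / ∑ j, v j) * Real.log ((∑ j, v j) / v i))

/-- Conditional empirical entropy of a `|𝒴| × |𝒴|^k` matrix `m` with nonnegative entries:
`H(m) = ∑_{b ∈ 𝒴^k} (∑_{β ∈ 𝒴} m_{β,b}) ⬝ 𝓗(m_{·,b})`. -/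
noncomputable def condEnt {Y : Type*} [Fintype Y] {k : ℕ} (m : Y → (Fin k → Y) → ℝ) : ℝ :=
  ∑ b : Fin k → Y, (∑ β : Y, m β b) * vecEnt (fun β => m β b)

/-- The `(k+1)`-th order empirical count matrix of a cyclic sequence `y` of length `n`:
`m_{β,b}(y^n) = (1/n)·|{1 ≤ i ≤ n : (y_{i−k},…,y_{i−1}) = b and y_i = β}|`,
with indices taken cyclically (modulo `n`). -/
noncomputable def empM {Y : Type*} [Fintype Y] [DecidableEq Y] (n k : ℕ) [NeZero n]
    (y : ZMod n → Y) (β : Y) (b : Fin k → Y) : ℝ :=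
  ((Finset.univ.filter (fun i : ZMod n =>
      y i = β ∧ ∀ j : Fin k, y (i - (k : ZMod n) + ((j : ℕ) : ZMod n)) = b j)).card : ℝ) / n

/-- Average per-letter distortion `d_n(x^n, y^n) = (1/n) ∑_{i=1}^n d(x_i, y_i)`. -/
noncomputable def distn {X Y : Type*} (n : ℕ) [NeZero n] (d : X → Y → ℝ)
    (x : ZMod n → X) (y : ZMod n → Y) : ℝ :=
  (∑ i : ZMod n, d (x i) (y i)) / n

/-- The energy (cost of problem (P1)): `𝓔(y^n) = H(m(y^n)) + α·d_n(x^n, y^n)`. -/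
noncomputable def energy {X Y : Type*} [Fintype Y] [DecidableEq Y] (n k : ℕ) [NeZero n]
    (x : ZMod n → X) (α : ℝ) (d : X → Y → ℝ) (y : ZMod n → Y) : ℝ :=
  condEnt (fun β b => empM n k y β b) + α * distn n d x y

/-- The linearized cost (problem (P2)):
`∑_{β,b} λ_{β,b}·m_{β,b}(y^n) + α·d_n(x^n, y^n)`. -/
noncomputable def linCost {X Y : Type*} [Fintype Y] [DecidableEq Y] (n k : ℕ) [NeZero n]
    (x : ZMod n → X) (α : ℝ) (d : X → Y → ℝ) (lam : Y → (Fin k → Y) → ℝ)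
    (y : ZMod n → Y) : ℝ :=
  (∑ β : Y, ∑ b : Fin k → Y, lam β b * empM n k y β b) + α * distn n d x y

/-- The coefficient matrix `Λ(q)` of a positive matrix `q`:
`λ_{β,b} = log((∑_{β'} q_{β',b}) / q_{β,b})`. -/
noncomputable def lamOf {Y : Type*} [Fintype Y] {k : ℕ}
    (q : Y → (Fin k → Y) → ℝ) (β : Y) (b : Fin k → Y) : ℝ :=
  Real.log ((∑ β' : Y, q β' b) / q β b)

/-!
The entropy term is a minimum of linear functionals: by Gibbs' inequality,
`H(m) ≤ ∑ λ_{β,b}(q) m_{β,b}` for every positive `q`, with equality at `m = q`. Hence the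
linearized cost with `λ = λ(m*)` majorizes the energy and agrees with it at the minimizer `z^n`,
so `z^n` minimizes both and the two minima coincide.
-/

open Real Finset

theorem sub_le_mul_log_div {a b : ℝ} (ha : 0 ≤ a) (hb : 0 < b) : a - b ≤ a * log (a / b) := by
  rcases ha.eq_or_lt with rfl | ha
  · simp [hb.le]
  · have h := one_sub_inv_le_log_of_pos (div_pos ha hb)
    calc a - b = a * (1 - (a / b)⁻¹) := by field_simp
      _ ≤ a * log (a / b) := mul_le_mul_of_nonneg_left h ha.le

section vecEnt

variable {ι : Type*} [Fintype ι]

theorem sum_mul_vecEnt (m : ι → ℝ) :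
    (∑ i, m i) * vecEnt m = ∑ i, log ((∑ j, m j) / m i) * m i := by
  by_cases h0 : m = 0
  · simp [h0, vecEnt]
  by_cases hs : ∑ j, m j = 0
  · simp [hs]
  rw [vecEnt, if_neg h0, mul_sum]
  refine sum_congr rfl fun i _ => ?_
  field_simp

/-- Gibbs' inequality. -/
theorem sum_mul_vecEnt_le {m q : ι → ℝ} (hm : ∀ i, 0 ≤ m i) (hq : ∀ i, 0 < q i) :
    (∑ i, m i) * vecEnt m ≤ ∑ i, log ((∑ j, q j) / q i) * m i := by
  rw [sum_mul_vecEnt]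
  set s := ∑ j, m j
  set S := ∑ j, q j with hS_def
  have hqS : ∀ i, q i ≤ S := fun i =>
    single_le_sum (fun j _ => (hq j).le) (mem_univ i)
  have hs0 : 0 ≤ s := sum_nonneg fun i _ => hm i
  rcases hs0.eq_or_lt with hs | hs
  · -- for `s = 0` the left side vanishes, since `log 0 = 0`
    simp only [← hs, zero_div, log_zero, zero_mul, sum_const_zero]
    exact sum_nonneg fun i _ =>
      mul_nonneg (log_nonneg ((one_le_div (hq i)).2 (hqS i))) (hm i)
  obtain ⟨i₀, -, -⟩ := exists_ne_zero_of_sum_ne_zero hs.ne'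
  have hS : 0 < S := (hq i₀).trans_le (hqS i₀)
  -- compare `m` with `q` rescaled to the same total mass `s`
  set r : ι → ℝ := fun i => q i * s / S
  have hr : ∀ i, 0 < r i := fun i => div_pos (mul_pos (hq i) hs) hS
  have hr_sum : ∑ i, r i = s := by
    simp only [r, ← sum_div, ← sum_mul, ← hS_def]
    field_simp
  have hterm : ∀ i, log (S / q i) * m i - log (s / m i) * m i = m i * log (m i / r i) := by
    intro i
    rcases (hm i).eq_or_lt with h | h
    · simp [← h]
    · have hqi := (hq i).ne'
      have : m i / r i = (S / q i) / (s / m i) := by simp only [r]; field_simp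
      rw [this, log_div (div_pos hS (hq i)).ne' (div_pos hs h).ne']
      ring
  have key : ∑ i, (m i - r i) ≤ ∑ i, (log (S / q i) * m i - log (s / m i) * m i) :=
    sum_le_sum fun i _ => (hterm i).symm ▸ sub_le_mul_log_div (hm i) (hr i)
  rw [sum_sub_distrib, sum_sub_distrib, hr_sum, sub_self] at key
  linarith

end vecEnt

section condEnt

variable {Y : Type*} [Fintype Y] {k : ℕ}

theorem condEnt_le_sum_lamOf_mul {m q : Y → (Fin k → Y) → ℝ} (hm : ∀ β b, 0 ≤ m β b)
    (hq : ∀ β b, 0 < q β b) : condEnt m ≤ ∑ β, ∑ b, lamOf q β b * m β b := by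
  rw [sum_comm]
  exact sum_le_sum fun b _ => sum_mul_vecEnt_le (fun β => hm β b) (fun β => hq β b)

theorem condEnt_eq_sum_lamOf_mul_self (q : Y → (Fin k → Y) → ℝ) :
    condEnt q = ∑ β, ∑ b, lamOf q β b * q β b := by
  rw [sum_comm]
  exact sum_congr rfl fun b _ => sum_mul_vecEnt fun β => q β b

end condEnt

section energy

variable {X Y : Type*} [Fintype Y] [DecidableEq Y] {n k : ℕ} [NeZero n]
  {x : ZMod n → X} {α : ℝ} {d : X → Y → ℝ}

theorem empM_nonneg (y : ZMod n → Y) (β : Y) (b : Fin k → Y) : 0 ≤ empM n k y β b := by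
  unfold empM
  positivity

theorem energy_le_linCost_lamOf {q : Y → (Fin k → Y) → ℝ} (hq : ∀ β b, 0 < q β b)
    (y : ZMod n → Y) : energy n k x α d y ≤ linCost n k x α d (lamOf q) y :=
  add_le_add_left (condEnt_le_sum_lamOf_mul (empM_nonneg y) hq) _

theorem linCost_lamOf_empM_self (z : ZMod n → Y) :
    linCost n k x α d (lamOf (empM n k z)) z = energy n k x α d z := by
  rw [energy, linCost, condEnt_eq_sum_lamOf_mul_self]

end energy

theorem ciInf_eq_of_le_of_eq_at_min {ι α : Type*} [ConditionallyCompleteLinearOrder α]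
    {f g : ι → α} {z : ι} (hfg : ∀ i, f i ≤ g i) (hz : ∀ i, f z ≤ f i) (heq : g z = f z) :
    ⨅ i, g i = ⨅ i, f i := by
  have : Nonempty ι := ⟨z⟩
  have hgz : ∀ i, g z ≤ g i := fun i => heq ▸ (hz i).trans (hfg i)
  have hinf : ∀ h : ι → α, (∀ i, h z ≤ h i) → ⨅ i, h i = h z := fun h hmin =>
    le_antisymm (ciInf_le ⟨h z, Set.forall_mem_range.2 hmin⟩ z) (le_ciInf hmin)
  rw [hinf g hgz, hinf f hz, heq]

theorem stmt7_general {X Y : Type*} [Fintype Y] [DecidableEq Y]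
    (n k : ℕ) [NeZero n]
    (x : ZMod n → X) (α : ℝ)
    (d : X → Y → ℝ)
    (z : ZMod n → Y)
    (hz : ∀ y : ZMod n → Y, energy n k x α d z ≤ energy n k x α d y)
    (hpos : ∀ (β : Y) (b : Fin k → Y), 0 < empM n k z β b) :
    (⨅ y : ZMod n → Y, linCost n k x α d (lamOf (empM n k z)) y) =
      ⨅ y : ZMod n → Y, energy n k x α d y :=
  ciInf_eq_of_le_of_eq_at_min (energy_le_linCost_lamOf hpos) hz (linCost_lamOf_empM_self z)

/-- Theorem 1, equality of minima: if `z^n` minimizes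
`H(m(y^n)) + α·d_n(x^n,y^n)`, `m* = m(z^n)` has strictly positive entries, and
`λ_{β,b} = log((∑_{β'} m*_{β',b})/m*_{β,b})`, then the minimum over `y^n` of the linearized
cost equals the minimum over `y^n` of the original cost. -/
theorem stmt7 {X Y : Type*} [Fintype X] [Fintype Y] [Nonempty X] [Nonempty Y] [DecidableEq Y]
    (n k : ℕ) [NeZero n] (hk : 0 < k)
    (x : ZMod n → X) (α : ℝ) (hα : 0 ≤ α)
    (d : X → Y → ℝ) (hd : ∀ a b, 0 ≤ d a b)
    (z : ZMod n → Y)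
    (hz : ∀ y : ZMod n → Y, energy n k x α d z ≤ energy n k x α d y)
    (hpos : ∀ (β : Y) (b : Fin k → Y), 0 < empM n k z β b) :
    (⨅ y : ZMod n → Y, linCost n k x α d (lamOf (empM n k z)) y) =
      ⨅ y : ZMod n → Y, energy n k x α d y :=
  stmt7_general n k x α d z hz hpos
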